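/- Let β: I → L^3 be a smooth curve with ⟨β,β⟩ = 0, β ≠ 0, and ⟨β',β'⟩ = 1, and suppose there is a smooth function k with β'(s) × β(s) = k(s) β(s) for all s. Then k(s)² = 1 for all s. -/

import Mathlib

/-- The Minkowski bilinear form on `ℝ³`: `⟨x,y⟩ = x₁y₁ + x₂y₂ - x₃y₃`. -/
noncomputable def mdot (u v : Fin 3 → ℝ) : ℝ := u 0 * v 0 + u 1 * v 1 - u 2 * v 2

/-- The Lorentzian cross product on `𝕃³`. -/
noncomputable def lcross (u v : Fin 3 → ℝ) : Fin 3 → ℝ :=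
  ![u 1 * v 2 - u 2 * v 1, u 2 * v 0 - u 0 * v 2, -(u 0 * v 1 - u 1 * v 0)]

/-- The mixed product `(u,v,w) = det(u,v,w)` (rows `u`, `v`, `w`). -/
noncomputable def mixed (u v w : Fin 3 → ℝ) : ℝ :=
  Matrix.det !![u 0, u 1, u 2; v 0, v 1, v 2; w 0, w 1, w 2]

/-- Algebraic core: if `b × a = k • a` with `⟨b,b⟩ = 1`, `⟨a,b⟩ = 0`, `a ≠ 0`, then `k² = 1`. -/
lemma key_alg (a b : Fin 3 → ℝ) (k : ℝ) (ha : a ≠ 0)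
    (hb : mdot b b = 1) (hab : mdot a b = 0)
    (hc : lcross b a = k • a) : k ^ 2 = 1 := by
  have e0 := congrFun hc 0
  have e1 := congrFun hc 1
  have e2 := congrFun hc 2
  simp only [lcross, mdot, Matrix.cons_val_zero, Matrix.cons_val_one, Matrix.head_cons,
    Matrix.cons_val_two, Matrix.tail_cons, Pi.smul_apply, smul_eq_mul] at e0 e1 e2
  have hex : ∃ i, a i ≠ 0 := by
    by_contra h
    push_neg at h
    exact ha (funext fun i => h i)
  simp only [mdot] at hb hab
  have h0 : (k ^ 2 - 1) * a 0 = 0 := by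
    linear_combination (-k) * e0 + b 2 * e1 - b 1 * e2 + a 0 * hb - b 0 * hab
  have h1 : (k ^ 2 - 1) * a 1 = 0 := by
    linear_combination (-k) * e1 - b 2 * e0 + b 0 * e2 + a 1 * hb - b 1 * hab
  have h2 : (k ^ 2 - 1) * a 2 = 0 := by
    linear_combination (-k) * e2 - b 1 * e0 + b 0 * e1 + a 2 * hb - b 2 * hab
  obtain ⟨i, hi⟩ := hex
  have : k ^ 2 - 1 = 0 := by
    fin_cases i
    · exact (mul_eq_zero.mp h0).resolve_right hi
    · exact (mul_eq_zero.mp h1).resolve_right hi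
    · exact (mul_eq_zero.mp h2).resolve_right hi
  linarith

/-- Differentiating `⟨β,β⟩ = 0` on an open set yields `⟨β,β'⟩ = 0`. -/
lemma key_deriv (I : Set ℝ) (hI : IsOpen I) (β : ℝ → Fin 3 → ℝ)
    (hβ : ContDiff ℝ (⊤ : ℕ∞) β) (hlight : ∀ s ∈ I, mdot (β s) (β s) = 0)
    {s : ℝ} (hs : s ∈ I) : mdot (β s) (deriv β s) = 0 := by
  have hd : Differentiable ℝ β := hβ.differentiable (by simp)
  have hds : HasDerivAt β (deriv β s) s := (hd s).hasDerivAt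
  have hcomp : ∀ i, HasDerivAt (fun t => β t i) (deriv β s i) s :=
    fun i => hasDerivAt_pi.mp hds i
  have hg : HasDerivAt (fun t => mdot (β t) (β t))
      (2 * mdot (β s) (deriv β s)) s := by
    have := (((hcomp 0).mul (hcomp 0)).add ((hcomp 1).mul (hcomp 1))).sub
      ((hcomp 2).mul (hcomp 2))
    simp only [mdot]
    exact this.congr_deriv (by ring)
  have hg0 : HasDerivAt (fun t => mdot (β t) (β t)) 0 s := by
    refine (hasDerivAt_const s (0 : ℝ)).congr_of_eventuallyEq ?_
    filter_upwards [hI.mem_nhds hs] with t ht using (hlight t ht)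
  have := hg.unique hg0
  linarith

/-- If β is lightlike with ⟨β',β'⟩ = 1 and β' × β = k β, then k² = 1. -/
theorem lcross_coefficient_sq_one
    (I : Set ℝ) (hI : IsOpen I) (β : ℝ → Fin 3 → ℝ) (k : ℝ → ℝ)
    (hβ : ContDiff ℝ (⊤ : ℕ∞) β) (hk : ContDiff ℝ (⊤ : ℕ∞) k)
    (hlight : ∀ s ∈ I, mdot (β s) (β s) = 0)
    (hne : ∀ s ∈ I, β s ≠ 0)
    (hunit : ∀ s ∈ I, mdot (deriv β s) (deriv β s) = 1)
    (hcross : ∀ s ∈ I, lcross (deriv β s) (β s) = k s • β s) :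
    ∀ s ∈ I, (k s) ^ 2 = 1 := by
  intro s hs
  exact key_alg (β s) (deriv β s) (k s) (hne s hs) (hunit s hs)
    (key_deriv I hI β hβ hlight hs) (hcross s hs)
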